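/- arXiv:2105.13099 — 9 statements merged into one kernel-verified Lean document; each statement's English description precedes it below -/
import Mathlib

section
/- Let P be a piecewise continuous (or integrable) function on [-1,1]. Then P is symmetric (i.e. P(-t) = P(t) for almost every t) if and only if ∫_{-1}^{1} t^{2k+1} P(t) dt = 0 for every natural number k. -/
/-!
Reflecting `t ↦ -t` shows that the `n`-th moment of `P t - P (-t)` over `[-1, 1]` is
`1 - (-1) ^ n` times the `n`-th moment of `P`. Hence an even `P` has vanishing odd moments, and
conversely, if the odd moments of `P` vanish then all moments of `P t - P (-t)` vanish; by
Weierstrass approximation this function is then orthogonal to every continuous function, so it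
vanishes almost everywhere.
-/

open MeasureTheory Set

section Reflection

variable {μ : Measure ℝ} [μ.IsNegInvariant]

theorem setIntegral_Icc_comp_neg {E : Type*} [NormedAddCommGroup E] [NormedSpace ℝ E] (c : ℝ)
    (f : ℝ → E) :
    ∫ t in Icc (-c) c, f (-t) ∂μ = ∫ t in Icc (-c) c, f t ∂μ := by
  simpa [neg_preimage, neg_Icc] using
    (Measure.measurePreserving_neg μ).setIntegral_preimage_emb
      (Homeomorph.neg ℝ).measurableEmbedding f (Icc (-c) c)

theorem MeasureTheory.IntegrableOn.comp_neg_Icc {E : Type*} [NormedAddCommGroup E] {c : ℝ}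
    {f : ℝ → E} (hf : IntegrableOn f (Icc (-c) c) μ) :
    IntegrableOn (fun t ↦ f (-t)) (Icc (-c) c) μ := by
  simpa [neg_preimage, neg_Icc, Function.comp_def] using
    ((Measure.measurePreserving_neg μ).integrableOn_comp_preimage
      (Homeomorph.neg ℝ).measurableEmbedding).2 hf

theorem setIntegral_pow_mul_sub_comp_neg {c : ℝ} {f : ℝ → ℝ} (hf : IntegrableOn f (Icc (-c) c) μ)
    (n : ℕ) :
    ∫ t in Icc (-c) c, t ^ n * (f t - f (-t)) ∂μ =
      (1 - (-1) ^ n) * ∫ t in Icc (-c) c, t ^ n * f t ∂μ := by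
  have hpow : ContinuousOn (fun t : ℝ ↦ t ^ n) (Icc (-c) c) := (continuous_pow n).continuousOn
  have hreflect : ∫ t in Icc (-c) c, t ^ n * f (-t) ∂μ =
      (-1) ^ n * ∫ t in Icc (-c) c, t ^ n * f t ∂μ := by
    calc ∫ t in Icc (-c) c, t ^ n * f (-t) ∂μ = ∫ t in Icc (-c) c, (-t) ^ n * f t ∂μ := by
          simpa using setIntegral_Icc_comp_neg c (fun t ↦ (-t) ^ n * f t)
      _ = ∫ t in Icc (-c) c, (-1) ^ n * (t ^ n * f t) ∂μ := by
          congr 1 with t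
          rw [neg_pow, mul_assoc]
      _ = (-1) ^ n * ∫ t in Icc (-c) c, t ^ n * f t ∂μ := integral_const_mul _ _
  simp_rw [mul_sub]
  rw [integral_sub (hf.continuousOn_mul hpow isCompact_Icc)
    (hf.comp_neg_Icc.continuousOn_mul hpow isCompact_Icc), hreflect]
  ring

end Reflection

section Moments

variable {μ : Measure ℝ} {a b : ℝ} {f : ℝ → ℝ}

theorem setIntegral_eval_mul_eq_zero_of_moments (hf : IntegrableOn f (Icc a b) μ)
    (hm : ∀ n : ℕ, ∫ t in Icc a b, t ^ n * f t ∂μ = 0) (p : Polynomial ℝ) :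
    ∫ t in Icc a b, p.eval t * f t ∂μ = 0 := by
  induction p using Polynomial.induction_on' with
  | add p q hp hq =>
    simp_rw [Polynomial.eval_add, add_mul]
    rw [integral_add (hf.continuousOn_mul p.continuousOn isCompact_Icc)
      (hf.continuousOn_mul q.continuousOn isCompact_Icc), hp, hq, add_zero]
  | monomial n c =>
    simp_rw [Polynomial.eval_monomial, mul_assoc]
    rw [integral_const_mul, hm n, mul_zero]

theorem setIntegral_mul_eq_zero_of_moments (hf : IntegrableOn f (Icc a b) μ)
    (hm : ∀ n : ℕ, ∫ t in Icc a b, t ^ n * f t ∂μ = 0) {g : ℝ → ℝ}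
    (hg : ContinuousOn g (Icc a b)) :
    ∫ t in Icc a b, g t * f t ∂μ = 0 := by
  set C := ∫ t in Icc a b, ‖f t‖ ∂μ
  have hC : 0 ≤ C := integral_nonneg fun t ↦ norm_nonneg _
  have hbound : ∀ ε > 0, |∫ t in Icc a b, g t * f t ∂μ| ≤ ε * C := by
    intro ε hε
    obtain ⟨p, hp⟩ := exists_polynomial_near_of_continuousOn a b g hg ε hε
    calc |∫ t in Icc a b, g t * f t ∂μ| = |∫ t in Icc a b, (g t - p.eval t) * f t ∂μ| := by
          simp_rw [sub_mul]
          rw [integral_sub (hf.continuousOn_mul hg isCompact_Icc)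
            (hf.continuousOn_mul p.continuousOn isCompact_Icc),
            setIntegral_eval_mul_eq_zero_of_moments hf hm, sub_zero]
      _ ≤ ∫ t in Icc a b, ε * ‖f t‖ ∂μ := by
          rw [← Real.norm_eq_abs]
          refine norm_integral_le_of_norm_le (hf.norm.const_mul ε) ?_
          filter_upwards [ae_restrict_mem measurableSet_Icc] with t ht
          rw [norm_mul, Real.norm_eq_abs, abs_sub_comm]
          exact mul_le_mul_of_nonneg_right (hp t ht).le (norm_nonneg _)
      _ = ε * C := integral_const_mul _ _
  refine abs_eq_zero.mp (le_antisymm (le_of_forall_gt_imp_ge_of_dense fun δ hδ ↦ ?_) (abs_nonneg _))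
  calc _ ≤ δ / (C + 1) * C := hbound _ (by positivity)
    _ ≤ δ / (C + 1) * (C + 1) := by gcongr; linarith
    _ = δ := by field_simp

theorem ae_eq_zero_of_moments_eq_zero (hf : IntegrableOn f (Icc a b) μ)
    (hm : ∀ n : ℕ, ∫ t in Icc a b, t ^ n * f t ∂μ = 0) :
    f =ᵐ[μ.restrict (Icc a b)] 0 :=
  ae_eq_zero_of_integral_contDiff_smul_eq_zero hf.locallyIntegrable fun _ hg _ ↦
    setIntegral_mul_eq_zero_of_moments hf hm hg.continuous.continuousOn

end Moments

/-- An integrable function on `[-1,1]` is symmetric (even) a.e. iff all its odd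
moments vanish. -/
theorem odd_moments_vanish_iff_symmetric (P : ℝ → ℝ)
    (hP : IntegrableOn P (Set.Icc (-1 : ℝ) 1)) :
    (∀ᵐ t ∂(volume.restrict (Set.Icc (-1 : ℝ) 1)), P (-t) = P t) ↔
      (∀ k : ℕ, ∫ t in Set.Icc (-1 : ℝ) 1, t ^ (2 * k + 1) * P t = 0) := by
  have hodd (k : ℕ) : (1 - (-1) ^ (2 * k + 1) : ℝ) = 2 := by
    rw [(odd_two_mul_add_one k).neg_one_pow]; norm_num
  constructor
  · intro hsymm k
    have hzero : ∫ t in Icc (-1 : ℝ) 1, t ^ (2 * k + 1) * (P t - P (-t)) = 0 := by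
      refine integral_eq_zero_of_ae ?_
      filter_upwards [hsymm] with t ht
      simp [ht]
    rw [setIntegral_pow_mul_sub_comp_neg hP, hodd] at hzero
    linarith
  · intro hm
    have hmoments (n : ℕ) : ∫ t in Icc (-1 : ℝ) 1, t ^ n * (P t - P (-t)) = 0 := by
      rw [setIntegral_pow_mul_sub_comp_neg hP]
      rcases n.even_or_odd with hn | ⟨k, rfl⟩
      · rw [hn.neg_one_pow, sub_self, zero_mul]
      · rw [hm k, mul_zero]
    filter_upwards [ae_eq_zero_of_moments_eq_zero (hP.sub hP.comp_neg_Icc) hmoments] with t ht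
    exact (sub_eq_zero.mp ht).symm
end

section
/- Let P and P' be Borel probability measures on a compact set X ⊂ ℝ, let v : X → ℝ be continuous and injective. If for every natural number k, ∫ (v(x) + ∫ v dP)^k dP(x) = ∫ (v(x) + ∫ v dP')^k dP'(x), then P = P'. -/
/-!
Taking `k = 1` shows that the shifts `∫ v ∂P` and `∫ v ∂P'` coincide, so `w = v + c` has the same
moments under both measures. On the compact space `X` the polynomials in the injective function
`w` form a point-separating subalgebra of `C(X, ℝ)`, which is dense by Stone–Weierstrass. Since
integration against a finite measure is continuous on `C(X, ℝ)`, the two measures (pulled back to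
`X`) agree on every continuous function, hence are equal.
-/

open MeasureTheory

namespace ContinuousMap

variable {X E : Type*} [TopologicalSpace X] [CompactSpace X] [MeasurableSpace X]
  [BorelSpace X] [NormedAddCommGroup E] [NormedSpace ℝ E] [CompleteSpace E]
  [SecondCountableTopologyEither X E]

noncomputable def integralCLM (μ : Measure X) [IsFiniteMeasure μ] : C(X, E) →L[ℝ] E :=
  L1.integralCLM ∘L toLp 1 μ ℝ

theorem integralCLM_apply (μ : Measure X) [IsFiniteMeasure μ] (f : C(X, E)) :
    integralCLM μ f = ∫ x, f x ∂μ := by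
  rw [integralCLM, ContinuousLinearMap.comp_apply, ← L1.integral_eq, L1.integral_eq_integral]
  exact integral_congr_ae (coeFn_toLp μ f)

end ContinuousMap

namespace MeasureTheory

section CompactSpace

variable {X : Type*} [TopologicalSpace X] [CompactSpace X] [HasOuterApproxClosed X]
  [MeasurableSpace X] [BorelSpace X] {μ ν : Measure X} [IsFiniteMeasure μ] [IsFiniteMeasure ν]

theorem ext_of_forall_mem_subalgebra_integral_eq_of_compactSpace {A : Subalgebra ℝ C(X, ℝ)}
    (hA : A.SeparatesPoints) (h : ∀ f ∈ A, ∫ x, f x ∂μ = ∫ x, f x ∂ν) : μ = ν := by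
  have hclosed : IsClosed {f : C(X, ℝ) | ∫ x, f x ∂μ = ∫ x, f x ∂ν} := by
    simpa only [← ContinuousMap.integralCLM_apply] using
      isClosed_eq (ContinuousMap.integralCLM μ).continuous
        (ContinuousMap.integralCLM ν).continuous
  have hdense : closure (A : Set C(X, ℝ)) = Set.univ := by
    simpa using congrArg SetLike.coe
      (ContinuousMap.subalgebra_topologicalClosure_eq_top_of_separatesPoints A hA)
  refine ext_of_forall_integral_eq_of_IsFiniteMeasure fun f => ?_
  exact closure_minimal h hclosed (hdense ▸ Set.mem_univ f.toContinuousMap)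

theorem ext_of_forall_integral_pow_eq {w : C(X, ℝ)} (hw : Function.Injective w)
    (h : ∀ k : ℕ, ∫ x, w x ^ k ∂μ = ∫ x, w x ^ k ∂ν) : μ = ν := by
  refine ext_of_forall_mem_subalgebra_integral_eq_of_compactSpace
    (A := Algebra.adjoin ℝ {w}) ?separates ?integral_eq
  case separates =>
    intro x y hxy
    exact ⟨w, ⟨w, Algebra.subset_adjoin rfl, rfl⟩, hw.ne hxy⟩
  case integral_eq =>
    intro f hf
    rw [Algebra.adjoin_singleton_eq_range_aeval] at hf
    obtain ⟨p, rfl⟩ := hf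
    rw [← ContinuousMap.integralCLM_apply μ, ← ContinuousMap.integralCLM_apply ν,
      AlgHom.toRingHom_eq_coe, RingHom.coe_coe, Polynomial.aeval_eq_sum_range, map_sum, map_sum]
    refine Finset.sum_congr rfl fun k _ => ?_
    simp only [map_smul, ContinuousMap.integralCLM_apply, ContinuousMap.pow_apply, h k]

end CompactSpace

variable {α : Type*} [MeasurableSpace α] {s : Set α} {μ ν : Measure α}

theorem integral_comap_subtype_val_of_compl_null {E : Type*} [NormedAddCommGroup E]
    [NormedSpace ℝ E] (hs : MeasurableSet s) (hμ : μ sᶜ = 0) (f : α → E) :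
    ∫ x : s, f x ∂μ.comap (↑) = ∫ x, f x ∂μ := by
  rw [integral_subtype_comap hs, Measure.restrict_eq_self_of_ae_mem (mem_ae_iff.mpr hμ)]

theorem Measure.eq_of_comap_subtype_val_eq (hs : MeasurableSet s) (hμ : μ sᶜ = 0)
    (hν : ν sᶜ = 0) (h : μ.comap ((↑) : s → α) = ν.comap (↑)) : μ = ν := by
  rw [← restrict_eq_self_of_ae_mem (mem_ae_iff.mpr hμ), ← map_comap_subtype_coe hs, h,
    map_comap_subtype_coe hs, restrict_eq_self_of_ae_mem (mem_ae_iff.mpr hν)]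

end MeasureTheory

/-- If two probability measures supported on a compact set `X ⊂ ℝ` give equal
moments of `v(x) + E[v]` for a continuous injective `v`, then they are equal. -/
theorem measure_eq_of_shifted_moments_eq (X : Set ℝ) (hX : IsCompact X)
    (v : ℝ → ℝ) (hv : ContinuousOn v X) (hvinj : Set.InjOn v X)
    (P P' : Measure ℝ) [IsProbabilityMeasure P] [IsProbabilityMeasure P']
    (hP : P Xᶜ = 0) (hP' : P' Xᶜ = 0)
    (h : ∀ k : ℕ,
      ∫ x, (v x + ∫ y, v y ∂P) ^ k ∂P = ∫ x, (v x + ∫ y, v y ∂P') ^ k ∂P') :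
    P = P' := by
  have hXm : MeasurableSet X := hX.isClosed.measurableSet
  have : CompactSpace X := isCompact_iff_compactSpace.mp hX
  have hv_integrable {μ : Measure ℝ} [IsFiniteMeasure μ] (hμ : μ Xᶜ = 0) : Integrable v μ :=
    Measure.restrict_eq_self_of_ae_mem (mem_ae_iff.mpr hμ) ▸ hv.integrableOn_compact hX
  have hmean : ∫ y, v y ∂P = ∫ y, v y ∂P' := by
    have h1 := h 1
    simp only [pow_one, integral_add (hv_integrable hP) (integrable_const _),
      integral_add (hv_integrable hP') (integrable_const _), integral_const, probReal_univ,
      one_smul] at h1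
    linarith
  set c := ∫ y, v y ∂P
  let w : C(X, ℝ) := ⟨fun x => v x + c, hv.domRestrict.add continuous_const⟩
  have hw : Function.Injective w := fun x y hxy =>
    Subtype.ext (hvinj x.2 y.2 (add_right_cancel hxy))
  refine Measure.eq_of_comap_subtype_val_eq hXm hP hP'
    (ext_of_forall_integral_pow_eq hw fun k => ?_)
  calc ∫ x, w x ^ k ∂P.comap (↑)
      _ = ∫ x, (v x + c) ^ k ∂P :=
        integral_comap_subtype_val_of_compl_null hXm hP fun x => (v x + c) ^ k
      _ = ∫ x, (v x + c) ^ k ∂P' := by rw [h k, hmean]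
      _ = ∫ x, w x ^ k ∂P'.comap (↑) :=
        (integral_comap_subtype_val_of_compl_null hXm hP' fun x => (v x + c) ^ k).symm
end

section
/- Let P and P' be centered Borel probability measures on a compact set X ⊂ ℝ (i.e. ∫ x dP = ∫ x dP' = 0), both having all odd moments equal to zero. If ∫ (x^2 + ∫ y^2 dP(y))^k dP(x) = ∫ (x^2 + ∫ y^2 dP'(y))^k dP'(x) for every natural number k, then P = P'. -/
/-!
Expanding `(x² + m)ᵏ` binomially shows that the `k`-th moment of `x² + m` is the `2k`-th moment
of the measure plus a combination of lower even moments with coefficients depending only on `m`.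
The case `k = 1` shows that both measures have the same `m = ∫ y² dP`, so by induction all even
moments agree; the odd ones vanish. A finite measure supported on a compact subset of `ℝ` is
determined by its moments, since by Weierstrass approximation the moments determine the integral
of every bounded continuous function.
-/

open Finset MeasureTheory Polynomial

theorem Continuous.integrable_of_ae_mem_isCompact {α E : Type*} [TopologicalSpace α]
    [T2Space α] [MeasurableSpace α] [OpensMeasurableSpace α] [NormedAddCommGroup E]
    {μ : Measure α} [IsFiniteMeasure μ] {K : Set α} {f : α → E}
    (hf : Continuous f) (hK : IsCompact K) (hμ : ∀ᵐ x ∂μ, x ∈ K) :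
    Integrable f μ := by
  rw [← Measure.restrict_eq_self_of_ae_mem hμ]
  exact hf.continuousOn.integrableOn_compact hK

namespace MeasureTheory

theorem dist_integral_le_of_forall_mem_dist_le {α E : Type*} [MeasurableSpace α]
    [NormedAddCommGroup E] [NormedSpace ℝ E] {μ : Measure α} [IsFiniteMeasure μ] {K : Set α}
    (hμ : ∀ᵐ x ∂μ, x ∈ K) {f g : α → E} (hf : Integrable f μ) (hg : Integrable g μ) {ε : ℝ}
    (hfg : ∀ x ∈ K, dist (f x) (g x) ≤ ε) :
    dist (∫ x, f x ∂μ) (∫ x, g x ∂μ) ≤ ε * μ.real Set.univ := by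
  rw [dist_eq_norm, ← integral_sub hf hg]
  refine norm_integral_le_of_norm_le_const (hμ.mono fun x hx => ?_)
  simpa only [dist_eq_norm] using hfg x hx

theorem integral_eval_eq_sum_coeff_mul_integral_pow {μ : Measure ℝ}
    (hint : ∀ n, Integrable (fun x : ℝ => x ^ n) μ) (p : ℝ[X]) :
    ∫ x, p.eval x ∂μ = ∑ i ∈ range (p.natDegree + 1), p.coeff i * ∫ x, x ^ i ∂μ := by
  simp_rw [eval_eq_sum_range]
  rw [integral_finsetSum _ fun i _ => (hint i).const_mul _]
  simp_rw [integral_const_mul]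

theorem integral_eq_of_integral_pow_eq_of_isCompact {μ ν : Measure ℝ} [IsFiniteMeasure μ]
    [IsFiniteMeasure ν] {K : Set ℝ} (hK : IsCompact K) (hμ : ∀ᵐ x ∂μ, x ∈ K)
    (hν : ∀ᵐ x ∂ν, x ∈ K) (hmom : ∀ n : ℕ, ∫ x, x ^ n ∂μ = ∫ x, x ^ n ∂ν) {f : ℝ → ℝ}
    (hf : Continuous f) : ∫ x, f x ∂μ = ∫ x, f x ∂ν := by
  have hpoly (p : ℝ[X]) : ∫ x, p.eval x ∂μ = ∫ x, p.eval x ∂ν := by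
    rw [integral_eval_eq_sum_coeff_mul_integral_pow
        (fun n => (continuous_pow n).integrable_of_ae_mem_isCompact hK hμ),
      integral_eval_eq_sum_coeff_mul_integral_pow
        (fun n => (continuous_pow n).integrable_of_ae_mem_isCompact hK hν)]
    simp_rw [hmom]
  set M := μ.real Set.univ + ν.real Set.univ
  have hclose : ∀ ε > 0, dist (∫ x, f x ∂μ) (∫ x, f x ∂ν) ≤ ε * M := by
    intro ε hε
    obtain ⟨p, hp⟩ := exists_polynomial_near_of_continuousOn (sInf K) (sSup K) f
      hf.continuousOn ε hε
    have hpf : ∀ x ∈ K, dist (f x) (p.eval x) ≤ ε := fun x hx => by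
      rw [dist_comm, Real.dist_eq]
      exact (hp x (subset_Icc_csInf_csSup hK.bddBelow hK.bddAbove hx)).le
    have hμε := dist_integral_le_of_forall_mem_dist_le hμ
      (hf.integrable_of_ae_mem_isCompact hK hμ)
      (p.continuous.integrable_of_ae_mem_isCompact hK hμ) hpf
    have hνε := dist_integral_le_of_forall_mem_dist_le hν
      (hf.integrable_of_ae_mem_isCompact hK hν)
      (p.continuous.integrable_of_ae_mem_isCompact hK hν) hpf
    calc dist (∫ x, f x ∂μ) (∫ x, f x ∂ν)
        ≤ dist (∫ x, f x ∂μ) (∫ x, p.eval x ∂μ) + dist (∫ x, p.eval x ∂ν) (∫ x, f x ∂ν) := by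
          simpa only [hpoly] using dist_triangle _ (∫ x, p.eval x ∂μ) _
      _ ≤ ε * M := by rw [dist_comm _ (∫ x, f x ∂ν)]; linarith
  refine eq_of_forall_dist_le fun ε hε => ?_
  have hM : 0 ≤ M := by positivity
  calc dist (∫ x, f x ∂μ) (∫ x, f x ∂ν) ≤ ε / (M + 1) * M := hclose _ (by positivity)
    _ ≤ ε := by rw [div_mul_eq_mul_div, div_le_iff₀ (by positivity)]; nlinarith

theorem Measure.ext_of_integral_pow_eq_of_isCompact {μ ν : Measure ℝ} [IsFiniteMeasure μ]
    [IsFiniteMeasure ν] {K : Set ℝ} (hK : IsCompact K) (hμ : ∀ᵐ x ∂μ, x ∈ K)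
    (hν : ∀ᵐ x ∂ν, x ∈ K) (hmom : ∀ n : ℕ, ∫ x, x ^ n ∂μ = ∫ x, x ^ n ∂ν) : μ = ν :=
  ext_of_forall_integral_eq_of_IsFiniteMeasure fun f =>
    integral_eq_of_integral_pow_eq_of_isCompact hK hμ hν hmom f.continuous

theorem integral_sq_add_const_pow {μ : Measure ℝ}
    (hint : ∀ n, Integrable (fun x : ℝ => x ^ n) μ) (m : ℝ) (k : ℕ) :
    ∫ x, (x ^ 2 + m) ^ k ∂μ
      = ∑ j ∈ range (k + 1), (∫ x, x ^ (2 * j) ∂μ) * (m ^ (k - j) * k.choose j) := by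
  simp_rw [add_pow, ← pow_mul, mul_assoc]
  rw [integral_finsetSum _ fun j _ => (hint (2 * j)).mul_const _]
  simp_rw [integral_mul_const]

theorem integral_pow_two_mul_eq_of_integral_sq_add_const_pow_eq {μ ν : Measure ℝ}
    (hμ : ∀ n, Integrable (fun x : ℝ => x ^ n) μ) (hν : ∀ n, Integrable (fun x : ℝ => x ^ n) ν)
    (m : ℝ) (h : ∀ k : ℕ, ∫ x, (x ^ 2 + m) ^ k ∂μ = ∫ x, (x ^ 2 + m) ^ k ∂ν) (k : ℕ) :
    ∫ x, x ^ (2 * k) ∂μ = ∫ x, x ^ (2 * k) ∂ν := by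
  induction k using Nat.strong_induction_on with
  | _ k ih =>
    have hk := h k
    rw [integral_sq_add_const_pow hμ, integral_sq_add_const_pow hν, sum_range_succ,
      sum_range_succ, sum_congr rfl fun j hj => by rw [ih j (mem_range.mp hj)]] at hk
    simpa using add_left_cancel hk

end MeasureTheory

theorem measure_eq_of_even_shifted_moments_eq_general (X : Set ℝ) (hX : IsCompact X)
    (P P' : Measure ℝ) [IsProbabilityMeasure P] [IsProbabilityMeasure P']
    (hP : P Xᶜ = 0) (hP' : P' Xᶜ = 0)
    (hodd : ∀ j : ℕ, ∫ x, x ^ (2 * j + 1) ∂P = 0)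
    (hodd' : ∀ j : ℕ, ∫ x, x ^ (2 * j + 1) ∂P' = 0)
    (h : ∀ k : ℕ,
      ∫ x, (x ^ 2 + ∫ y, y ^ 2 ∂P) ^ k ∂P
        = ∫ x, (x ^ 2 + ∫ y, y ^ 2 ∂P') ^ k ∂P') :
    P = P' := by
  have hXP : ∀ᵐ x ∂P, x ∈ X := mem_ae_iff.2 hP
  have hXP' : ∀ᵐ x ∂P', x ∈ X := mem_ae_iff.2 hP'
  have hint (n : ℕ) : Integrable (fun x : ℝ => x ^ n) P :=
    (continuous_pow n).integrable_of_ae_mem_isCompact hX hXP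
  have hint' (n : ℕ) : Integrable (fun x : ℝ => x ^ n) P' :=
    (continuous_pow n).integrable_of_ae_mem_isCompact hX hXP'
  have hsecond : ∫ y, y ^ 2 ∂P = ∫ y, y ^ 2 ∂P' := by
    have h1 := h 1
    simp only [pow_one, integral_add (hint 2) (integrable_const _),
      integral_add (hint' 2) (integrable_const _), integral_const,
      probReal_univ, one_smul] at h1
    linarith
  rw [← hsecond] at h
  have heven := integral_pow_two_mul_eq_of_integral_sq_add_const_pow_eq hint hint' _ h
  refine Measure.ext_of_integral_pow_eq_of_isCompact hX hXP hXP' fun n => ?_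
  obtain ⟨k, rfl | rfl⟩ := n.even_or_odd'
  · exact heven k
  · rw [hodd k, hodd' k]

/-- Two centered probability measures on a compact set `X ⊂ ℝ` with vanishing odd
moments and equal moments of `x² + E[y²]` are equal. -/
theorem measure_eq_of_even_shifted_moments_eq (X : Set ℝ) (hX : IsCompact X)
    (P P' : Measure ℝ) [IsProbabilityMeasure P] [IsProbabilityMeasure P']
    (hP : P Xᶜ = 0) (hP' : P' Xᶜ = 0)
    (hcent : ∫ x, x ∂P = 0) (hcent' : ∫ x, x ∂P' = 0)
    (hodd : ∀ j : ℕ, ∫ x, x ^ (2 * j + 1) ∂P = 0)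
    (hodd' : ∀ j : ℕ, ∫ x, x ^ (2 * j + 1) ∂P' = 0)
    (h : ∀ k : ℕ,
      ∫ x, (x ^ 2 + ∫ y, y ^ 2 ∂P) ^ k ∂P
        = ∫ x, (x ^ 2 + ∫ y, y ^ 2 ∂P') ^ k ∂P') :
    P = P' :=
  measure_eq_of_even_shifted_moments_eq_general X hX P P' hP hP' hodd hodd' h
end

section
/- Let P be a Borel probability measure on [-1,1] with ∫ x dP(x) = 0, and suppose x ∈ [-1,1] with x ≠ 0. If ∫ (x - y)^{2k} dP(y) = ∫ (x + y)^{2k} dP(y) for every natural number k ≥ 1, then all odd moments of P vanish: ∫ y^{2k+1} dP(y) = 0 for every k ∈ ℕ. -/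
open MeasureTheory

/-- For a centered probability measure `P` on `[-1,1]` and a fixed `x ≠ 0`, if
`∫ (x-y)^{2k} dP = ∫ (x+y)^{2k} dP` for all `k ≥ 1`, then all odd moments of `P`
vanish. -/
theorem odd_moments_vanish_of_even_reflection (P : Measure ℝ)
    [IsProbabilityMeasure P] (hP : P (Set.Icc (-1 : ℝ) 1)ᶜ = 0)
    (hcent : ∫ y, y ∂P = 0)
    (x : ℝ) (hx : x ∈ Set.Icc (-1 : ℝ) 1) (hx0 : x ≠ 0)
    (h : ∀ k : ℕ, 1 ≤ k → ∫ y, (x - y) ^ (2 * k) ∂P = ∫ y, (x + y) ^ (2 * k) ∂P) :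
    ∀ k : ℕ, ∫ y, y ^ (2 * k + 1) ∂P = 0 := by
  have haeb : ∀ᵐ y ∂P, y ∈ Set.Icc (-1:ℝ) 1 := by
    rw [ae_iff]
    exact hP
  have hint : ∀ j : ℕ, Integrable (fun y : ℝ => y ^ j) P := by
    intro j
    refine (integrable_const (1:ℝ)).mono' ((measurable_id.pow_const j).aestronglyMeasurable) ?_
    filter_upwards [haeb] with y hy
    rw [Real.norm_eq_abs, abs_pow]
    exact pow_le_one₀ (abs_nonneg y) (abs_le.mpr ⟨hy.1, hy.2⟩)
  intro k
  induction k using Nat.strong_induction_on with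
  | _ k IH =>
  set n := 2*k+2 with hn
  have key : ∀ c : ℝ, ∫ y, (x + c * y) ^ n ∂P
      = ∑ i ∈ Finset.range (n+1), x ^ i * c ^ (n - i) * (n.choose i) * ∫ y, y ^ (n-i) ∂P := by
    intro c
    have hpt : ∀ y : ℝ, (x + c*y)^n = ∑ i ∈ Finset.range (n+1),
        x ^ i * c ^ (n-i) * (n.choose i) * y ^ (n-i) := by
      intro y
      rw [add_pow]
      refine Finset.sum_congr rfl fun i _ => ?_
      rw [mul_pow]; ring
    simp_rw [hpt]
    rw [integral_finset_sum]
    · exact Finset.sum_congr rfl fun i _ => integral_const_mul _ _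
    · intro i _
      exact (hint (n-i)).const_mul _
  have hplus := key 1
  have hminus := key (-1)
  simp only [one_mul] at hplus
  have hminus' : ∫ y, (x - y) ^ n ∂P
      = ∑ i ∈ Finset.range (n+1), x ^ i * (-1:ℝ) ^ (n - i) * (n.choose i) * ∫ y, y ^ (n-i) ∂P := by
    rw [← hminus]
    congr 1
    ext y
    ring_nf
  have hh : ∫ y, (x - y) ^ n ∂P = ∫ y, (x + y) ^ n ∂P := by
    have := h (k+1) (by omega)
    simpa [show 2*(k+1) = n by omega] using this
  have hsum0 : ∑ i ∈ Finset.range (n+1),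
      x ^ i * (1 - (-1:ℝ) ^ (n - i)) * (n.choose i) * ∫ y, y ^ (n-i) ∂P = 0 := by
    have := sub_eq_zero.mpr (hplus.symm.trans (hh.symm.trans hminus'))
    rw [← Finset.sum_sub_distrib] at this
    rw [← this]
    refine Finset.sum_congr rfl fun i _ => ?_
    ring
  rw [Finset.sum_eq_single 1] at hsum0
  · have hne : x ^ 1 * (1 - (-1:ℝ) ^ (n - 1)) * ((n.choose 1 : ℕ) : ℝ) ≠ 0 := by
      have hodd : Odd (n - 1) := by
        refine ⟨k, by omega⟩
      rw [hodd.neg_one_pow, Nat.choose_one_right]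
      have hn0 : ((n : ℕ) : ℝ) ≠ 0 := by
        positivity
      simp only [pow_one]
      intro hz
      rcases mul_eq_zero.mp hz with hz | hz
      · rcases mul_eq_zero.mp hz with hz | hz
        · exact hx0 hz
        · norm_num at hz
      · exact hn0 hz
    have hM := (mul_eq_zero.mp hsum0).resolve_left hne
    rw [show n - 1 = 2*k+1 by omega] at hM
    exact hM
  · intro i hi hi1
    rcases Nat.even_or_odd (n - i) with he | ho
    · rw [he.neg_one_pow]
      ring
    · have hi' : i < n + 1 := Finset.mem_range.mp hi
      have hjm : (n - i) % 2 = 1 := Nat.odd_iff.mp ho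
      set m := (n - i) / 2 with hm
      have hji : n - i = 2*m + 1 := by omega
      have hmk : m < k := by omega
      rw [hji, IH m hmk]
      ring
  · intro h1
    exfalso
    exact h1 (Finset.mem_range.mpr (by omega))
end

section
/- Let K ≥ 1 and let P ∈ ℝ^K be a probability vector with strictly positive entries such that no nontrivial {-1,0,1}-combination of its entries vanishes: for all s ∈ {-1,0,1}^K with s ≠ 0, ∑_i P_i s_i ≠ 0. Let W, W' be symmetric K×K matrices with entries in [0,1]. If for all functions f0, f1 : ℝ → ℝ one has ∑_i P_i f1(∑_j P_j f0(W_{ij})) = ∑_i P_i f1(∑_j P_j f0(W'_{ij})), then W = W'. -/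
open Finset

/-- Two-layer invariant aggregations with an incoherent weight vector separate
symmetric matrices with entries in `[0,1]`. -/
theorem matrix_eq_of_invariant_aggregations_eq (K : ℕ) (hK : 1 ≤ K)
    (P : Fin K → ℝ) (hPpos : ∀ i, 0 < P i) (hPsum : ∑ i, P i = 1)
    (hPinc : ∀ s : Fin K → ℝ, (∀ i, s i = -1 ∨ s i = 0 ∨ s i = 1) → s ≠ 0 →
      ∑ i, P i * s i ≠ 0)
    (W W' : Matrix (Fin K) (Fin K) ℝ)
    (hWsymm : W.IsSymm) (hW'symm : W'.IsSymm)
    (hW01 : ∀ i j, W i j ∈ Set.Icc (0 : ℝ) 1)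
    (hW'01 : ∀ i j, W' i j ∈ Set.Icc (0 : ℝ) 1)
    (h : ∀ f0 f1 : ℝ → ℝ,
      ∑ i, P i * f1 (∑ j, P j * f0 (W i j))
        = ∑ i, P i * f1 (∑ j, P j * f0 (W' i j))) :
    W = W' := by
  classical
  -- Key: two {0,1}-valued vectors with equal P-weighted sums are equal.
  have key : ∀ (a b : Fin K → ℝ), (∀ i, a i = 0 ∨ a i = 1) → (∀ i, b i = 0 ∨ b i = 1) →
      (∑ i, P i * a i) = ∑ i, P i * b i → a = b := by
    intro a b ha hb hsum
    by_contra hne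
    refine hPinc (fun i => a i - b i) ?_ ?_ ?_
    · intro i; rcases ha i with h1 | h1 <;> rcases hb i with h2 | h2 <;>
        simp [h1, h2]
    · intro h0
      apply hne; funext i
      have := congrFun h0 i
      simpa [sub_eq_zero] using this
    · have hsplit : ∑ i, P i * (a i - b i) = ∑ i, P i * a i - ∑ i, P i * b i := by
        simp [mul_sub, Finset.sum_sub_distrib]
      rw [hsplit, hsum, sub_self]
  -- The P-weighted level-set sizes of rows agree.
  have deg : ∀ (x : ℝ) (i : Fin K),
      (∑ j, P j * (if W i j = x then (1:ℝ) else 0))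
        = ∑ j, P j * (if W' i j = x then (1:ℝ) else 0) := by
    intro x i
    set d : Fin K → ℝ := fun k => ∑ j, P j * (if W k j = x then (1:ℝ) else 0) with hd
    set d' : Fin K → ℝ := fun k => ∑ j, P j * (if W' k j = x then (1:ℝ) else 0) with hd'
    have hx := h (fun y => if y = x then (1:ℝ) else 0)
      (fun u => if u = d i then (1:ℝ) else 0)
    have heq := key (fun k => if d k = d i then (1:ℝ) else 0)
      (fun k => if d' k = d i then (1:ℝ) else 0)
      (fun k => by by_cases hc : d k = d i <;> simp [hc])
      (fun k => by by_cases hc : d' k = d i <;> simp [hc]) hx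
    have hi := congrFun heq i
    by_cases hc : d' i = d i
    · exact hc.symm
    · simp [hc] at hi
  ext i j
  have heq := key (fun k => if W i k = W i j then (1:ℝ) else 0)
    (fun k => if W' i k = W i j then (1:ℝ) else 0)
    (fun k => by by_cases hc : W i k = W i j <;> simp [hc])
    (fun k => by by_cases hc : W' i k = W i j <;> simp [hc])
    (deg (W i j) i)
  have hj := congrFun heq j
  by_cases hc : W' i j = W i j
  · exact hc.symm
  · simp [hc] at hj
end

section
/- Let K ≥ 1, P ∈ ℝ^K an incoherent probability vector (all entries positive and ∑_i P_i s_i ≠ 0 for every nonzero s ∈ {-1,0,1}^K), and W a symmetric invertible K×K real matrix. If k, k' ∈ {1,…,K} satisfy ∑_i f(∑_j W_{kj} W_{ji} P_j) P_i = ∑_i f(∑_j W_{k'j} W_{ji} P_j) P_i for every function f : ℝ → ℝ, then k = k'. -/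
open Finset

/-- With an incoherent probability vector `P` and an invertible symmetric matrix
`W`, the two-hop invariant features separate communities: if the `P`-weighted sums
of `f` applied to the two-hop features of `k` and `k'` agree for every `f`, then
`k = k'`. -/
theorem community_eq_of_two_hop_features (K : ℕ) (hK : 1 ≤ K)
    (P : Fin K → ℝ) (hPpos : ∀ i, 0 < P i) (hPsum : ∑ i, P i = 1)
    (hPinc : ∀ s : Fin K → ℝ, (∀ i, s i = -1 ∨ s i = 0 ∨ s i = 1) → s ≠ 0 →
      ∑ i, P i * s i ≠ 0)
    (W : Matrix (Fin K) (Fin K) ℝ) (hWsymm : W.IsSymm) (hWinv : W.det ≠ 0)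
    (k k' : Fin K)
    (h : ∀ f : ℝ → ℝ,
      ∑ i, f (∑ j, W k j * W j i * P j) * P i
        = ∑ i, f (∑ j, W k' j * W j i * P j) * P i) :
    k = k' := by
  set a : Fin K → ℝ := fun i => ∑ j, W k j * W j i * P j with ha
  set b : Fin K → ℝ := fun i => ∑ j, W k' j * W j i * P j with hb
  -- Step 1: a = b
  have hab : a = b := by
    by_contra hne
    obtain ⟨i0, hi0⟩ : ∃ i, a i ≠ b i := by
      by_contra hc
      push_neg at hc
      exact hne (funext hc)
    set f : ℝ → ℝ := fun x => if x = a i0 then 1 else 0 with hf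
    have hsum := h f
    set s : Fin K → ℝ := fun i => f (a i) - f (b i) with hs
    have hsval : ∀ i, s i = -1 ∨ s i = 0 ∨ s i = 1 := by
      intro i
      simp only [hs, hf]
      by_cases h1 : a i = a i0 <;> by_cases h2 : b i = a i0 <;> simp [h1, h2]
    have hsne : s ≠ 0 := by
      intro hz
      have : s i0 = 0 := by rw [hz]; rfl
      simp [hs, hf, Ne.symm hi0] at this
    have hzero : ∑ i, P i * s i = 0 := by
      simp only [hs, mul_sub]
      rw [Finset.sum_sub_distrib]
      have h1 : ∑ i, P i * f (a i) = ∑ i, f (a i) * P i := by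
        simp [mul_comm]
      have h2 : ∑ i, P i * f (b i) = ∑ i, f (b i) * P i := by
        simp [mul_comm]
      rw [h1, h2, hsum]
      ring
    exact hPinc s hsval hsne hzero
  -- Step 2: from a = b deduce rows equal
  set v : Fin K → ℝ := fun j => (W k j - W k' j) * P j with hv
  have hmul : W.transpose.mulVec v = 0 := by
    funext i
    have := congrFun hab i
    simp only [ha, hb] at this
    simp only [Matrix.mulVec, dotProduct, Matrix.transpose_apply, hv,
      Pi.zero_apply]
    have : ∑ j, W j i * ((W k j - W k' j) * P j) = 0 := by
      have := congrFun hab i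
      simp only [ha, hb] at this
      have h' : ∑ j, W k j * W j i * P j - ∑ j, W k' j * W j i * P j = 0 := by
        rw [this]; ring
      rw [← Finset.sum_sub_distrib] at h'
      rw [← h']
      apply Finset.sum_congr rfl
      intro j _
      ring
    exact this
  have hvz : v = 0 := by
    have hdet : W.transpose.det ≠ 0 := by rwa [Matrix.det_transpose]
    exact Matrix.eq_zero_of_mulVec_eq_zero hdet hmul
  have hrow : W k = W k' := by
    funext j
    have := congrFun hvz j
    simp only [hv, Pi.zero_apply] at this
    have hP := (hPpos j).ne'
    have := mul_eq_zero.mp this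
    rcases this with h1 | h1
    · linarith [sub_eq_zero.mp h1]
    · exact absurd h1 hP
  by_contra hkk
  exact hWinv (Matrix.det_zero_of_row_eq hkk hrow)
end

section
/- Let P ∈ ℝ^K be a probability vector with ∑_i P_i s_i ≠ 0 for all nonzero s ∈ {-1,0,1}^K. Let a, a' ∈ ℝ^K. If for every function f : ℝ → {0,1}, ∑_i P_i f(a_i) = ∑_i P_i f(a'_i), then a_i = a'_i for all i. -/
open Finset

/-- An incoherent probability vector separates real vectors coordinatewise
through `P`-weighted pushforwards by all `{0,1}`-valued functions. -/
theorem vectors_eq_of_indicator_pushforwards_eq (K : ℕ)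
    (P : Fin K → ℝ) (hPsum : ∑ i, P i = 1)
    (hPinc : ∀ s : Fin K → ℝ, (∀ i, s i = -1 ∨ s i = 0 ∨ s i = 1) → s ≠ 0 →
      ∑ i, P i * s i ≠ 0)
    (a a' : Fin K → ℝ)
    (h : ∀ f : ℝ → ℝ, (∀ t, f t = 0 ∨ f t = 1) →
      ∑ i, P i * f (a i) = ∑ i, P i * f (a' i)) :
    ∀ i, a i = a' i := by
  intro i0
  by_contra hne
  set f : ℝ → ℝ := fun t => if t = a i0 then 1 else 0 with hf
  have hf01 : ∀ t, f t = 0 ∨ f t = 1 := by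
    intro t; simp only [hf]; split <;> simp
  set s : Fin K → ℝ := fun i => f (a i) - f (a' i) with hs
  have hs01 : ∀ i, s i = -1 ∨ s i = 0 ∨ s i = 1 := by
    intro i
    rcases hf01 (a i) with h1 | h1 <;> rcases hf01 (a' i) with h2 | h2 <;>
      simp [hs, h1, h2]
  have hsne : s ≠ 0 := by
    intro h0
    have : s i0 = 0 := congrFun h0 i0
    simp [hs, hf, Ne.symm hne] at this
  have hsum : ∑ i, P i * s i = 0 := by
    have := h f hf01
    simp only [hs, mul_sub, Finset.sum_sub_distrib]
    linarith
  exact hPinc s hs01 hsne hsum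
end

section
/- Define P = (1/3, 2/3) and for γ ∈ [0,1] the symmetric matrix W_γ with entries W_γ(1,1)=γ, W_γ(1,2)=(1−γ)/2, W_γ(2,2)=(1+γ)/4. Then the function F(γ) := ∑_x ∑_y (∑_z W_γ(x,z) W_γ(z,y) P_z)^2 P_y P_x equals γ^4/16 − γ^3/12 + γ^2/24 − γ/108 + 17/1296, and in particular F is not constant on [0,1]. -/
open Finset

/-- The connectivity matrix of the 2-community SBM family. -/
noncomputable def Wsbm (γ : ℝ) : Matrix (Fin 2) (Fin 2) ℝ :=
  !![γ, (1 - γ) / 2; (1 - γ) / 2, (1 + γ) / 4]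

/-- The community weights of the 2-community SBM family. -/
noncomputable def Psbm : Fin 2 → ℝ := ![1 / 3, 2 / 3]

/-- The invariant c-SGNN output: the squared two-hop features averaged over both
variables. -/
noncomputable def Fsbm (γ : ℝ) : ℝ :=
  ∑ x : Fin 2, ∑ y : Fin 2,
    (∑ z : Fin 2, Wsbm γ x z * Wsbm γ z y * Psbm z) ^ 2 * Psbm y * Psbm x

lemma Fsbm_eq (γ : ℝ) :
    Fsbm γ = γ ^ 4 / 16 - γ ^ 3 / 12 + γ ^ 2 / 24 - γ / 108 + 17 / 1296 := by
  simp [Fsbm, Wsbm, Psbm, Fin.sum_univ_two]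
  ring

/-- `F(γ) = γ⁴/16 − γ³/12 + γ²/24 − γ/108 + 17/1296` on `[0,1]`, and in
particular `F` is not constant on `[0,1]`. -/
theorem sbm_invariant_sgnn_not_constant :
    (∀ γ ∈ Set.Icc (0 : ℝ) 1,
      Fsbm γ = γ ^ 4 / 16 - γ ^ 3 / 12 + γ ^ 2 / 24 - γ / 108 + 17 / 1296) ∧
    (∃ γ ∈ Set.Icc (0 : ℝ) 1, ∃ γ' ∈ Set.Icc (0 : ℝ) 1, Fsbm γ ≠ Fsbm γ') := by
  refine ⟨fun γ _ => Fsbm_eq γ, 0, ⟨le_refl _, zero_le_one⟩, 1, ⟨zero_le_one, le_refl _⟩, ?_⟩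
  rw [Fsbm_eq, Fsbm_eq]; norm_num
end

section
/- Let (E, ‖·‖_E) be a Banach space, L a bounded operator on E with ‖L‖ ≤ 1, and suppose there is a Hilbert space H and a linear map S : E → H with ‖L x‖_E ≤ ‖S x‖_H and ‖S x‖_H ≤ ‖x‖_E for all x. Let (β_{ijk}) for 1 ≤ i ≤ d, 1 ≤ j ≤ d', k ∈ ℕ be coefficients with matrices B_k = (β_{ijk})_{ji} such that ∑_k ‖B_k‖ < ∞, and let h_{ij}(L) = ∑_k β_{ijk} L^k. Then for any x_1, …, x_d ∈ E, √(∑_j ‖∑_i h_{ij}(L) x_i‖_E²) ≤ (‖B_{0,|·|}‖ + ∑_{k≥1} ‖B_k‖) · √(∑_i ‖x_i‖_E²), where B_{0,|·|} is the matrix of absolute values of B_0 and ‖·‖ on matrices is the operator (spectral) norm. -/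
open Finset

/-- The operator (spectral) norm of a real matrix, i.e. the norm of the induced
operator between Euclidean spaces. -/
noncomputable def specNorm {d d' : ℕ} (B : Matrix (Fin d') (Fin d) ℝ) : ℝ :=
  ‖LinearMap.toContinuousLinearMap (Matrix.toEuclideanLin B)‖

/-!
Work with the ℓ²-aggregate `PiLp 2` of the output channels and split the filter output by order.
The order-0 part lives in `E` only: the triangle inequality in each channel bounds it by the
entrywise absolute matrix `|B₀|` acting on the vector of norms `‖xᵢ‖`. For `k ≥ 1` write
`Lᵏ = L ∘ Lᵏ⁻¹`; since `‖L z‖ ≤ ‖S z‖`, the order-`k` part is dominated by `B_k` acting on the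
`H`-valued family `S Lᵏ⁻¹ xᵢ`. On families in a Hilbert space a real matrix acts with norm at most
its spectral norm (expand in an orthonormal basis of their span and apply `B_k` coordinatewise),
and `‖S Lᵏ⁻¹ z‖ ≤ ‖z‖` because `L` is a contraction. Summing over `k` gives the bound.
-/

open WithLp Matrix

theorem norm_toLp_two_le_of_forall_norm_le {ι F G : Type*} [Fintype ι]
    [SeminormedAddCommGroup F] [SeminormedAddCommGroup G] {a : ι → F} {b : ι → G}
    (h : ∀ i, ‖a i‖ ≤ ‖b i‖) : ‖toLp 2 a‖ ≤ ‖toLp 2 b‖ := by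
  simp only [PiLp.norm_eq_of_L2]
  gcongr with i
  exact h i

theorem norm_toLp_two_norm {ι F : Type*} [Fintype ι] [SeminormedAddCommGroup F] (a : ι → F) :
    ‖toLp 2 fun i => ‖a i‖‖ = ‖toLp 2 a‖ := by
  simp only [PiLp.norm_eq_of_L2, norm_norm]

section specNorm

variable {d d' : ℕ}

theorem norm_toLp_mulVec_le_specNorm (B : Matrix (Fin d') (Fin d) ℝ) (c : Fin d → ℝ) :
    ‖toLp 2 (B *ᵥ c)‖ ≤ specNorm B * ‖toLp 2 c‖ :=
  (LinearMap.toContinuousLinearMap (Matrix.toEuclideanLin B)).le_opNorm (toLp 2 c)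

theorem abs_le_specNorm (B : Matrix (Fin d') (Fin d) ℝ) (j : Fin d') (i : Fin d) :
    |B j i| ≤ specNorm B := by
  have h := norm_toLp_mulVec_le_specNorm B (Pi.single i 1)
  rw [← PiLp.single, PiLp.norm_single, norm_one, mul_one] at h
  calc |B j i| = ‖(toLp 2 (B *ᵥ Pi.single i 1)) j‖ := by simp [Matrix.mulVec_single]
    _ ≤ _ := (PiLp.norm_apply_le _ j).trans h

theorem norm_toLp_sum_smul_le_specNorm_abs {E : Type*} [SeminormedAddCommGroup E]
    [NormedSpace ℝ E] (B : Matrix (Fin d') (Fin d) ℝ) (x : Fin d → E) :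
    ‖toLp 2 fun j => ∑ i, B j i • x i‖ ≤
      specNorm (Matrix.of fun j i => |B j i|) * ‖toLp 2 x‖ := by
  have hrow : ∀ j, ‖∑ i, B j i • x i‖ ≤
      ‖((Matrix.of fun j i => |B j i|) *ᵥ fun i => ‖x i‖) j‖ := by
    intro j
    have hentry : ((Matrix.of fun j i => |B j i|) *ᵥ fun i => ‖x i‖) j = ∑ i, |B j i| * ‖x i‖ :=
      rfl
    rw [hentry, Real.norm_of_nonneg (by positivity)]
    exact (norm_sum_le _ _).trans_eq (by simp [norm_smul])
  calc ‖toLp 2 fun j => ∑ i, B j i • x i‖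
      ≤ ‖toLp 2 ((Matrix.of fun j i => |B j i|) *ᵥ fun i => ‖x i‖)‖ :=
        norm_toLp_two_le_of_forall_norm_le hrow
    _ ≤ _ := by
        rw [← norm_toLp_two_norm x]
        exact norm_toLp_mulVec_le_specNorm _ _

theorem norm_toLp_sum_smul_map_linearIsometry {F G : Type*} [SeminormedAddCommGroup F]
    [NormedSpace ℝ F] [SeminormedAddCommGroup G] [NormedSpace ℝ G] (T : F →ₗᵢ[ℝ] G)
    (B : Matrix (Fin d') (Fin d) ℝ) (y : Fin d → F) :
    ‖toLp 2 fun j => ∑ i, B j i • T (y i)‖ = ‖toLp 2 fun j => ∑ i, B j i • y i‖ := by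
  simp only [PiLp.norm_eq_of_L2, ← map_smul, ← map_sum, LinearIsometry.norm_map]

theorem norm_toLp_sum_smul_le_specNorm_of_euclidean {ι : Type*} [Fintype ι]
    (B : Matrix (Fin d') (Fin d) ℝ) (y : Fin d → EuclideanSpace ℝ ι) :
    ‖toLp 2 fun j => ∑ i, B j i • y i‖ ≤ specNorm B * ‖toLp 2 y‖ := by
  have hcoord : ∀ t, ‖toLp 2 (B *ᵥ fun i => y i t)‖ ^ 2 ≤
      specNorm B ^ 2 * ‖toLp 2 fun i => y i t‖ ^ 2 := by
    intro t
    rw [← mul_pow]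
    exact pow_le_pow_left₀ (norm_nonneg _) (norm_toLp_mulVec_le_specNorm B _) 2
  refine le_of_sq_le_sq ?_ (mul_nonneg (norm_nonneg _) (norm_nonneg _))
  calc ‖toLp 2 fun j => ∑ i, B j i • y i‖ ^ 2
      = ∑ t, ‖toLp 2 (B *ᵥ fun i => y i t)‖ ^ 2 := by
        simp only [PiLp.norm_sq_eq_of_L2]
        rw [Finset.sum_comm]
        simp [Matrix.mulVec, dotProduct]
    _ ≤ ∑ t, specNorm B ^ 2 * ‖toLp 2 fun i => y i t‖ ^ 2 := Finset.sum_le_sum fun t _ => hcoord t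
    _ = (specNorm B * ‖toLp 2 y‖) ^ 2 := by
        simp only [mul_pow, ← Finset.mul_sum, PiLp.norm_sq_eq_of_L2]
        rw [Finset.sum_comm]

theorem norm_toLp_sum_smul_le_specNorm {H : Type*} [NormedAddCommGroup H]
    [InnerProductSpace ℝ H] (B : Matrix (Fin d') (Fin d) ℝ) (y : Fin d → H) :
    ‖toLp 2 fun j => ∑ i, B j i • y i‖ ≤ specNorm B * ‖toLp 2 y‖ := by
  let V := Submodule.span ℝ (Set.range y)
  have : FiniteDimensional ℝ V := FiniteDimensional.span_of_finite ℝ (Set.finite_range y)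
  let b := stdOrthonormalBasis ℝ V
  let z : Fin d → V := fun i => ⟨y i, Submodule.subset_span (Set.mem_range_self i)⟩
  have hy : y = fun i => V.subtypeₗᵢ (z i) := rfl
  have hnorm : ‖toLp 2 y‖ = ‖toLp 2 fun i => b.repr (z i)‖ := by
    simp only [PiLp.norm_eq_of_L2, hy, LinearIsometry.norm_map, LinearIsometryEquiv.norm_map]
  calc ‖toLp 2 fun j => ∑ i, B j i • y i‖
      = ‖toLp 2 fun j => ∑ i, B j i • b.repr (z i)‖ := by
        rw [hy, norm_toLp_sum_smul_map_linearIsometry V.subtypeₗᵢ,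
          ← norm_toLp_sum_smul_map_linearIsometry b.repr.toLinearIsometry]
        rfl
    _ ≤ specNorm B * ‖toLp 2 y‖ := by
        rw [hnorm]
        exact norm_toLp_sum_smul_le_specNorm_of_euclidean B _

end specNorm

theorem norm_pow_apply_le_of_forall_norm_apply_le {E : Type*} [SeminormedAddCommGroup E]
    [NormedSpace ℝ E] {L : E →L[ℝ] E} (hL : ∀ z, ‖L z‖ ≤ ‖z‖) (k : ℕ) (z : E) :
    ‖(L ^ k) z‖ ≤ ‖z‖ := by
  induction k generalizing z with
  | zero => simp
  | succ k ih =>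
    rw [pow_succ, mul_apply_eq_comp]
    exact ih _ |>.trans (hL z)

section filter

variable {E : Type*} [NormedAddCommGroup E] [NormedSpace ℝ E] {d d' : ℕ}

noncomputable def filterTerm (β : Fin d → Fin d' → ℕ → ℝ) (L : E →L[ℝ] E) (x : Fin d → E)
    (k : ℕ) : PiLp 2 fun _ : Fin d' => E :=
  toLp 2 fun j => ∑ i, β i j k • (L ^ k) (x i)

variable {β : Fin d → Fin d' → ℕ → ℝ} {L : E →L[ℝ] E}

theorem hasSum_filterTerm [CompleteSpace E] (hL : ∀ z, ‖L z‖ ≤ ‖z‖)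
    (hsum : Summable fun k : ℕ => specNorm (Matrix.of fun j i => β i j k)) (x : Fin d → E) :
    HasSum (filterTerm β L x) (toLp 2 fun j => ∑ i, ∑' k, β i j k • (L ^ k) (x i)) := by
  have hcoeff : ∀ i j, Summable fun k => β i j k • (L ^ k) (x i) := by
    intro i j
    refine Summable.of_norm_bounded (hsum.mul_right ‖x i‖) fun k => ?_
    rw [norm_smul, Real.norm_eq_abs]
    exact mul_le_mul (abs_le_specNorm (Matrix.of fun j i => β i j k) j i)
      (norm_pow_apply_le_of_forall_norm_apply_le hL k (x i)) (norm_nonneg _) (norm_nonneg _)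
  have hcoord : HasSum (fun k => ofLp (filterTerm β L x k))
      fun j => ∑ i, ∑' k, β i j k • (L ^ k) (x i) :=
    Pi.hasSum.mpr fun j => hasSum_sum fun i _ => (hcoeff i j).hasSum
  exact (PiLp.continuousLinearEquiv 2 ℝ _).hasSum.mp hcoord

theorem norm_filterTerm_zero_le (x : Fin d → E) :
    ‖filterTerm β L x 0‖ ≤ specNorm (Matrix.of fun j i => |β i j 0|) * ‖toLp 2 x‖ := by
  simp only [filterTerm, pow_zero, one_apply_eq_self]
  exact norm_toLp_sum_smul_le_specNorm_abs (Matrix.of fun j i => β i j 0) x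

theorem norm_filterTerm_succ_le {H : Type*} [NormedAddCommGroup H] [InnerProductSpace ℝ H]
    (S : E →ₗ[ℝ] H) (hSL : ∀ z, ‖L z‖ ≤ ‖S z‖) (hS : ∀ z, ‖S z‖ ≤ ‖z‖) (x : Fin d → E) (k : ℕ) :
    ‖filterTerm β L x (k + 1)‖ ≤
      specNorm (Matrix.of fun j i => β i j (k + 1)) * ‖toLp 2 x‖ := by
  have hL : ∀ z, ‖L z‖ ≤ ‖z‖ := fun z => (hSL z).trans (hS z)
  have hfactor : ∀ j, ‖∑ i, β i j (k + 1) • (L ^ (k + 1)) (x i)‖ ≤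
      ‖∑ i, β i j (k + 1) • S ((L ^ k) (x i))‖ := fun j => by
    simpa only [pow_succ', mul_apply_eq_comp, map_sum, map_smul]
      using hSL (∑ i, β i j (k + 1) • (L ^ k) (x i))
  calc ‖filterTerm β L x (k + 1)‖
      ≤ ‖toLp 2 fun j => ∑ i, β i j (k + 1) • S ((L ^ k) (x i))‖ :=
        norm_toLp_two_le_of_forall_norm_le hfactor
    _ ≤ specNorm (Matrix.of fun j i => β i j (k + 1)) * ‖toLp 2 fun i => S ((L ^ k) (x i))‖ :=
        norm_toLp_sum_smul_le_specNorm (Matrix.of fun j i => β i j (k + 1)) _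
    _ ≤ specNorm (Matrix.of fun j i => β i j (k + 1)) * ‖toLp 2 x‖ := by
        gcongr
        · exact norm_nonneg _
        · exact norm_toLp_two_le_of_forall_norm_le fun i =>
            (hS _).trans (norm_pow_apply_le_of_forall_norm_apply_le hL k (x i))

end filter

theorem analytic_filter_bound_general {E H : Type*}
    [NormedAddCommGroup E] [NormedSpace ℝ E] [CompleteSpace E]
    [NormedAddCommGroup H] [InnerProductSpace ℝ H]
    (L : E →L[ℝ] E)
    (S : E →ₗ[ℝ] H) (hSL : ∀ z, ‖L z‖ ≤ ‖S z‖) (hS : ∀ z, ‖S z‖ ≤ ‖z‖)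
    (d d' : ℕ) (β : Fin d → Fin d' → ℕ → ℝ)
    (hsum : Summable fun k : ℕ => specNorm (Matrix.of fun j i => β i j k))
    (x : Fin d → E) :
    Real.sqrt (∑ j, ‖∑ i, ∑' k : ℕ, β i j k • (L ^ k) (x i)‖ ^ 2) ≤
      (specNorm (Matrix.of fun j i => |β i j 0|)
          + ∑' k : ℕ, specNorm (Matrix.of fun j i => β i j (k + 1)))
        * Real.sqrt (∑ i, ‖x i‖ ^ 2) := by
  have hF := hasSum_filterTerm (fun z => (hSL z).trans (hS z)) hsum x
  have htail : ‖∑' k, filterTerm β L x (k + 1)‖ ≤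
      (∑' k : ℕ, specNorm (Matrix.of fun j i => β i j (k + 1))) * ‖toLp 2 x‖ :=
    tsum_of_norm_bounded (((summable_nat_add_iff 1).mpr hsum).hasSum.mul_right _)
      (norm_filterTerm_succ_le S hSL hS x)
  calc Real.sqrt (∑ j, ‖∑ i, ∑' k : ℕ, β i j k • (L ^ k) (x i)‖ ^ 2)
      = ‖∑' k, filterTerm β L x k‖ := by rw [hF.tsum_eq, PiLp.norm_eq_of_L2]
    _ = ‖filterTerm β L x 0 + ∑' k, filterTerm β L x (k + 1)‖ := by
        rw [hF.summable.tsum_eq_zero_add]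
    _ ≤ ‖filterTerm β L x 0‖ + ‖∑' k, filterTerm β L x (k + 1)‖ := norm_add_le _ _
    _ ≤ _ := add_le_add (norm_filterTerm_zero_le x) htail
    _ = _ := by rw [add_mul, PiLp.norm_eq_of_L2]

/-- Bound on analytic filters of a contraction `L` on a Banach space `E`
factoring through a Hilbert space `H`. -/
theorem analytic_filter_bound {E H : Type*}
    [NormedAddCommGroup E] [NormedSpace ℝ E] [CompleteSpace E]
    [NormedAddCommGroup H] [InnerProductSpace ℝ H] [CompleteSpace H]
    (L : E →L[ℝ] E) (hL : ‖L‖ ≤ 1)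
    (S : E →ₗ[ℝ] H) (hSL : ∀ z, ‖L z‖ ≤ ‖S z‖) (hS : ∀ z, ‖S z‖ ≤ ‖z‖)
    (d d' : ℕ) (β : Fin d → Fin d' → ℕ → ℝ)
    (hsum : Summable fun k : ℕ => specNorm (Matrix.of fun j i => β i j k))
    (x : Fin d → E) :
    Real.sqrt (∑ j, ‖∑ i, ∑' k : ℕ, β i j k • (L ^ k) (x i)‖ ^ 2) ≤
      (specNorm (Matrix.of fun j i => |β i j 0|)
          + ∑' k : ℕ, specNorm (Matrix.of fun j i => β i j (k + 1)))
        * Real.sqrt (∑ i, ‖x i‖ ^ 2) :=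
  analytic_filter_bound_general L S hSL hS d d' β hsum x
end
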